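/- Let q and r be integers with 0 < r < q, and let R be the submonoid of ℤ² (written additively) generated by (1,0), (0,1), and (r, r−q). Then the saturation of R inside ℤ², i.e. the set of x ∈ ℤ² with n·x ∈ R for some positive integer n, equals {(a,b) ∈ ℤ² : a ≥ 0 and r·b ≥ (r−q)·a}. -/

import Mathlib

/-! Every generator lies in the cone `C = {a ≥ 0, r b ≥ (r - q) a}`, and `C` is cut out by linear
inequalities, so it contains the saturation. Conversely, for `(a, b) ∈ C` the decomposition
`r • (a, b) = a • (r, r - q) + (r b - (r - q) a) • (0, 1)` has nonnegative coefficients. -/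

def puncturingCone (q r : ℤ) : AddSubmonoid (ℤ × ℤ) where
  carrier := {x | 0 ≤ x.1 ∧ (r - q) * x.1 ≤ r * x.2}
  zero_mem' := by simp
  add_mem' := by
    rintro x y ⟨hx₁, hx₂⟩ ⟨hy₁, hy₂⟩
    refine ⟨add_nonneg hx₁ hy₁, ?_⟩
    simpa only [Prod.fst_add, Prod.snd_add, mul_add] using add_le_add hx₂ hy₂

namespace puncturingCone

variable {q r : ℤ}

theorem mem_iff {x : ℤ × ℤ} : x ∈ puncturingCone q r ↔ 0 ≤ x.1 ∧ (r - q) * x.1 ≤ r * x.2 :=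
  Iff.rfl

theorem mem_of_nsmul_mem {n : ℕ} (hn : 0 < n) {x : ℤ × ℤ} (hx : n • x ∈ puncturingCone q r) :
    x ∈ puncturingCone q r := by
  obtain ⟨h₁, h₂⟩ := mem_iff.1 hx
  simp only [Prod.smul_fst, Prod.smul_snd, mul_smul_comm] at h₁ h₂
  exact ⟨(nsmul_nonneg_iff hn.ne').1 h₁, (nsmul_le_nsmul_iff_right hn.ne').1 h₂⟩

theorem closure_le (hr : 0 ≤ r) (hrq : r ≤ q) :
    AddSubmonoid.closure {(1, 0), (0, 1), (r, r - q)} ≤ puncturingCone q r := by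
  rw [AddSubmonoid.closure_le]
  rintro x (rfl | rfl | rfl) <;> rw [SetLike.mem_coe, mem_iff]
  · exact ⟨zero_le_one, by linarith⟩
  · exact ⟨le_rfl, by simpa using hr⟩
  · exact ⟨hr, by rw [mul_comm]⟩

theorem nsmul_mem_closure_of_mem {n : ℕ} {x : ℤ × ℤ} (hx : x ∈ puncturingCone q n) :
    n • x ∈ AddSubmonoid.closure {(1, 0), (0, 1), ((n : ℤ), n - q)} := by
  obtain ⟨ha, hb⟩ := mem_iff.1 hx
  lift x.1 to ℕ using ha with a ha'
  obtain ⟨c, hc⟩ : ∃ c : ℕ, (c : ℤ) = n * x.2 - (n - q) * a := ⟨_, Int.toNat_of_nonneg (by linarith)⟩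
  have decomp : n • x = a • ((n : ℤ), (n : ℤ) - q) + c • ((0 : ℤ), (1 : ℤ)) := by
    ext <;> simp only [nsmul_eq_mul, Prod.fst_mul, Prod.snd_mul, Prod.fst_natCast, Prod.snd_natCast,
      ← ha', hc, Prod.smul_mk, Prod.mk_add_mk] <;> ring
  rw [decomp]
  exact add_mem (AddSubmonoid.nsmul_mem _ (AddSubmonoid.subset_closure (by simp)) _)
    (AddSubmonoid.nsmul_mem _ (AddSubmonoid.subset_closure (by simp)) _)

end puncturingCone

/-- For `0 < r < q`, the saturation inside `ℤ²` of the submonoid generated by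
`(1,0)`, `(0,1)`, `(r, r-q)` is `{(a,b) : a ≥ 0 ∧ r·b ≥ (r-q)·a}`. -/
theorem saturation_of_puncturing_monoid (q r : ℤ) (hr : 0 < r) (hrq : r < q) :
    {x : ℤ × ℤ | ∃ n : ℕ, 0 < n ∧
        n • x ∈ AddSubmonoid.closure ({(1, 0), (0, 1), (r, r - q)} : Set (ℤ × ℤ))} =
      {x : ℤ × ℤ | 0 ≤ x.1 ∧ (r - q) * x.1 ≤ r * x.2} := by
  ext x
  constructor
  · rintro ⟨n, hn, hx⟩
    exact puncturingCone.mem_of_nsmul_mem hn (puncturingCone.closure_le hr.le hrq.le hx)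
  · intro hx
    lift r to ℕ using hr.le
    exact ⟨r, by exact_mod_cast hr, puncturingCone.nsmul_mem_closure_of_mem hx⟩
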